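/- Error Locator Test: assume the Ordered-Degree Condition deg m_0 ≤ deg m_1 ≤ … ≤ deg m_{n-1}. Let a ∈ F[x] with deg a < K, let Y = a + E, and let t_H = ⌊(n−k)/2⌋. For a subset S ⊆ {0,…,n-1}, let G = ∏_{i∈S} m_i, let N_zero(G) be the number of indices j ∈ {0,…,n-1} with m_j dividing G, and set Z = (G·Y) mod M_n. Assume: (1) the number of indices i with E mod m_i ≠ 0 is at most t_H; (2) N_zero(G) ≤ t_H and deg G ≤ Σ_{i=n−t_H}^{n-1} deg m_i; (3) G divides Z; (4) deg Z − deg G < K. Then the error locator polynomial Λ_e = ∏_{i : E mod m_i ≠ 0} m_i divides G, and Z = G·a. -/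

import Mathlib

open Polynomial Finset
open scoped Classical

/-!
Write `Z = G * W`. Since `Mₙ ∣ G * (W - a - E)`, every modulus `mᵢ` with `i ∉ S` and `mᵢ ∣ E` is
coprime to `G` and hence divides `W - a`. At most `2 t_H ≤ n - k` indices lie in `S` or are error
positions, so by the degree ordering the remaining moduli have total degree at least `K`, which
exceeds `deg (W - a)`; by the Chinese remainder theorem `W = a`. Then `Mₙ ∣ G * E`, which puts
every error position in `S`.
-/

theorem Finset.sum_le_sum_of_card_le_of_forall_sdiff_le {ι M : Type*} [DecidableEq ι]
    [AddCommMonoid M] [LinearOrder M] [IsOrderedAddMonoid M] [CanonicallyOrderedAdd M]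
    {s t : Finset ι} {f : ι → M} (hcard : #t ≤ #s)
    (hf : ∀ i ∈ t \ s, ∀ j ∈ s \ t, f i ≤ f j) :
    ∑ i ∈ t, f i ≤ ∑ i ∈ s, f i := by
  have hsdiff : #(t \ s) ≤ #(s \ t) := card_sdiff_le_card_sdiff_iff.mpr hcard
  rw [← sum_inter_add_sum_sdiff t s, ← sum_inter_add_sum_sdiff s t, inter_comm]
  refine add_le_add le_rfl ?_
  rcases (s \ t).eq_empty_or_nonempty with hst | hst
  · have hts : t \ s = ∅ := by simpa [hst] using hsdiff
    simp [hts, hst]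
  calc ∑ i ∈ t \ s, f i ≤ #(t \ s) • (s \ t).inf' hst f :=
        sum_le_card_nsmul _ _ _ fun i hi => le_inf' hst f fun j hj => hf i hi j hj
    _ ≤ #(s \ t) • (s \ t).inf' hst f := nsmul_le_nsmul_left zero_le hsdiff
    _ ≤ ∑ i ∈ s \ t, f i := card_nsmul_le_sum _ _ _ fun j hj => inf'_le f hj

theorem Fin.sum_filter_val_lt_le_sum {M : Type*} [AddCommMonoid M] [LinearOrder M]
    [IsOrderedAddMonoid M] [CanonicallyOrderedAdd M] {n k : ℕ} {f : Fin n → M} (hf : Monotone f)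
    {s : Finset (Fin n)} (hs : #sᶜ ≤ n - k) :
    ∑ i ∈ univ.filter (fun i : Fin n => (i : ℕ) < k), f i ≤ ∑ i ∈ s, f i := by
  refine sum_le_sum_of_card_le_of_forall_sdiff_le ?_ fun i hi j hj => hf ?_
  · rw [card_compl, Fintype.card_fin] at hs
    rw [Fin.card_filter_val_lt]
    omega
  · simp only [mem_sdiff, mem_filter, mem_univ, true_and] at hi hj
    exact Fin.le_def.mpr (by omega)

namespace Polynomial

open Function

variable {R ι : Type*} [CommRing R]

theorem Monic.degree_lt_of_natDegree_mul_lt {G W : R[X]} {K : ℕ} (hG : G.Monic)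
    (h : (G * W).natDegree < G.natDegree + K) : W.degree < K := by
  rcases eq_or_ne W 0 with rfl | hW
  · simp
  · rw [hG.natDegree_mul' hW] at h
    exact (natDegree_lt_iff_degree_lt hW).mp (by omega)

theorem dvd_of_dvd_prod_mul {m : ι → R[X]} (hcop : Pairwise (IsCoprime on m)) {S : Finset ι}
    {i : ι} (hi : i ∉ S) {p : R[X]} (h : m i ∣ (∏ j ∈ S, m j) * p) : m i ∣ p :=
  (IsCoprime.prod_right fun _ hj => hcop (ne_of_mem_of_not_mem hj hi).symm).dvd_of_dvd_mul_left h

theorem eq_zero_of_forall_dvd_of_degree_lt_sum [Nontrivial R] {m : ι → R[X]} {s : Finset ι}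
    (hmonic : ∀ i ∈ s, (m i).Monic) (hcop : (s : Set ι).Pairwise (IsCoprime on m)) {p : R[X]}
    (hdvd : ∀ i ∈ s, m i ∣ p) (hdeg : p.degree < ∑ i ∈ s, (m i).natDegree) : p = 0 := by
  have hprod : (∏ i ∈ s, m i).Monic := monic_prod_of_monic _ _ hmonic
  by_contra hp
  refine hprod.not_dvd_of_degree_lt hp ?_ (prod_dvd_of_coprime hcop hdvd)
  rwa [degree_eq_natDegree hprod.ne_zero, natDegree_prod_of_monic _ _ hmonic]

end Polynomial

theorem error_locator_test_general
    {F : Type*} [Field F] [DecidableEq F] (n : ℕ)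
    (m : Fin n → F[X])
    (hmonic : ∀ i, (m i).Monic)
    (hcop : ∀ i j, i ≠ j → IsCoprime (m i) (m j))
    (k : ℕ)
    (K : ℕ)
    (hK : K = (∏ i ∈ Finset.univ.filter (fun i : Fin n => (i : ℕ) < k), m i).natDegree)
    (hord : ∀ i j : Fin n, i ≤ j → (m i).natDegree ≤ (m j).natDegree)
    (Mn : F[X]) (hMn : Mn = ∏ i, m i)
    (E : F[X])
    (a : F[X]) (ha : a.degree < (K : WithBot ℕ))
    (tH : ℕ) (htH : tH = (n - k) / 2)
    (S : Finset (Fin n))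
    (G : F[X]) (hG : G = ∏ i ∈ S, m i)
    (Z : F[X]) (hZ : Z = (G * (a + E)) %ₘ Mn)
    (h1 : (Finset.univ.filter (fun i : Fin n => E %ₘ m i ≠ 0)).card ≤ tH)
    (h2a : (Finset.univ.filter (fun j : Fin n => m j ∣ G)).card ≤ tH)
    (h3 : G ∣ Z)
    (h4 : Z.natDegree < G.natDegree + K) :
    (∏ i ∈ Finset.univ.filter (fun i : Fin n => E %ₘ m i ≠ 0), m i) ∣ G ∧ Z = G * a := by
  obtain ⟨W, rfl⟩ := h3
  set B := univ.filter (fun i : Fin n => E %ₘ m i ≠ 0)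
  have hmemB : ∀ i, i ∈ B ↔ ¬ m i ∣ E := fun i => by
    simp [B, modByMonic_eq_zero_iff_dvd (hmonic i)]
  have hdvd : ∀ i, m i ∣ G * (W - a - E) := fun i => by
    refine (hMn ▸ dvd_prod_of_mem m (mem_univ i)).trans ?_
    simpa [hZ, mul_sub, mul_add, sub_sub] using dvd_modByMonic_sub (G * (a + E)) Mn
  have hWdeg : W.degree < K :=
    (hG ▸ monic_prod_of_monic _ _ fun i _ => hmonic i : G.Monic).degree_lt_of_natDegree_mul_lt h4
  have hcardS : #S ≤ tH :=
    (card_le_card fun j hj => mem_filter.mpr ⟨mem_univ j, hG ▸ dvd_prod_of_mem m hj⟩).trans h2a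
  have hK_le : K ≤ ∑ i ∈ (S ∪ B)ᶜ, (m i).natDegree := by
    rw [hK, natDegree_prod_of_monic _ _ fun i _ => hmonic i]
    refine Fin.sum_filter_val_lt_le_sum (fun i j => hord i j) ?_
    rw [compl_compl]
    have := card_union_le S B
    omega
  have hWa : W - a = 0 := by
    refine eq_zero_of_forall_dvd_of_degree_lt_sum (fun i _ => hmonic i)
      (fun i _ j _ hij => hcop i j hij) (fun i hi => ?_)
      ((degree_sub_le W a).trans_lt (max_lt hWdeg ha) |>.trans_le (by exact_mod_cast hK_le))
    simp only [mem_compl, mem_union, not_or, hmemB, not_not] at hi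
    refine dvd_of_dvd_prod_mul (fun i j => hcop i j) hi.1 (hG ▸ ?_)
    simpa [mul_sub] using dvd_add (hdvd i) (dvd_mul_of_dvd_right hi.2 G)
  obtain rfl : W = a := sub_eq_zero.mp hWa
  refine ⟨hG ▸ prod_dvd_prod_of_subset _ _ m fun i hi => ?_, rfl⟩
  by_contra hiS
  exact (hmemB i).mp hi (dvd_of_dvd_prod_mul (fun i j => hcop i j) hiS (hG ▸ by simpa using hdvd i))

/-- Error Locator Test: under the Ordered-Degree Condition, with `t_H = ⌊(n−k)/2⌋`,
`G = ∏_{i∈S} mᵢ` and `Z = (G·Y) mod Mₙ`, if (1) the number of `i` with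
`E mod mᵢ ≠ 0` is at most `t_H`, (2) `N_zero(G) ≤ t_H` and
`deg G ≤ Σ_{i=n−t_H}^{n-1} deg mᵢ`, (3) `G ∣ Z`, (4) `deg Z − deg G < K`,
then the error locator polynomial `Λ_e` divides `G` and `Z = G·a`. -/
theorem error_locator_test
    {F : Type*} [Field F] [DecidableEq F] (n : ℕ) (hn : 1 ≤ n)
    (m : Fin n → F[X])
    (hmonic : ∀ i, (m i).Monic)
    (hdeg : ∀ i, 1 ≤ (m i).natDegree)
    (hcop : ∀ i j, i ≠ j → IsCoprime (m i) (m j))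
    (k : ℕ) (hk1 : 1 ≤ k) (hkn : k ≤ n)
    (N K : ℕ)
    (hN : N = (∏ i, m i).natDegree)
    (hK : K = (∏ i ∈ Finset.univ.filter (fun i : Fin n => (i : ℕ) < k), m i).natDegree)
    (hord : ∀ i j : Fin n, i ≤ j → (m i).natDegree ≤ (m j).natDegree)
    (Mn : F[X]) (hMn : Mn = ∏ i, m i)
    (E : F[X]) (hE0 : E ≠ 0) (hEdeg : E.degree < Mn.degree)
    (a : F[X]) (ha : a.degree < (K : WithBot ℕ))
    (tH : ℕ) (htH : tH = (n - k) / 2)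
    (S : Finset (Fin n))
    (G : F[X]) (hG : G = ∏ i ∈ S, m i)
    (Z : F[X]) (hZ : Z = (G * (a + E)) %ₘ Mn)
    (h1 : (Finset.univ.filter (fun i : Fin n => E %ₘ m i ≠ 0)).card ≤ tH)
    (h2a : (Finset.univ.filter (fun j : Fin n => m j ∣ G)).card ≤ tH)
    (h2b : G.natDegree ≤ ∑ i ∈ Finset.univ.filter (fun i : Fin n => n - tH ≤ (i : ℕ)), (m i).natDegree)
    (h3 : G ∣ Z)
    (h4 : Z.natDegree < G.natDegree + K) :
    (∏ i ∈ Finset.univ.filter (fun i : Fin n => E %ₘ m i ≠ 0), m i) ∣ G ∧ Z = G * a :=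
  error_locator_test_general n m hmonic hcop k K hK hord Mn hMn E a ha tH htH S G hG Z hZ h1 h2a h3
    h4
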